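/- With the notation and hypotheses of the Riccati construction (σ > 0 solving the Riccati equation, β_k = −α_k*σ − R₀*H_k, R₀*R₀ = I, (C,A) observable, AΠ_k + BH_k = Π_kΛ_k, CΠ_k + DH_k = 0, BR₀ = Π_kα_k, DR₀ = 0, ker Π_k = {0}), every eigenvalue of Λ_k + α_kβ_k has negative real part, and the rational function K_β(z) = R₀ + (H_k+R₀β_k)(zI−(Λ_k+α_kβ_k))^{-1}α_k satisfies K_β*(z)K_β(z) = I, i.e., is a tall inner function. -/
import Mathlib
set_option maxHeartbeats 1000000


open Matrix

noncomputable section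

/-- Map a complex matrix entrywise to rational functions. -/
def mc {a b : ℕ} (M : Matrix (Fin a) (Fin b) ℂ) : Matrix (Fin a) (Fin b) (RatFunc ℂ) :=
  M.map (⇑(RatFunc.C : ℂ →+* RatFunc ℂ))

/-- The resolvent `(z I − M)⁻¹` as a matrix of rational functions. -/
def res {a : ℕ} (M : Matrix (Fin a) (Fin a) ℂ) : Matrix (Fin a) (Fin a) (RatFunc ℂ) :=
  ((Matrix.scalar (Fin a) (RatFunc.X : RatFunc ℂ)) - mc M)⁻¹

/-- The "anti-resolvent" `(z I + M)⁻¹`, used for para-hermitian conjugates. -/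
def resneg {a : ℕ} (M : Matrix (Fin a) (Fin a) ℂ) : Matrix (Fin a) (Fin a) (RatFunc ℂ) :=
  ((Matrix.scalar (Fin a) (RatFunc.X : RatFunc ℂ)) + mc M)⁻¹

/-- Observability of a pair `(C, A)`. -/
def Observable {p n : ℕ} (C : Matrix (Fin p) (Fin n) ℂ) (A : Matrix (Fin n) (Fin n) ℂ) : Prop :=
  ∀ v : Fin n → ℂ, (∀ k : ℕ, C *ᵥ ((A ^ k) *ᵥ v) = 0) → v = 0

/-- Controllability of a pair `(Λ, G)`. -/
def Controllable {r m : ℕ} (L : Matrix (Fin r) (Fin r) ℂ) (G : Matrix (Fin r) (Fin m) ℂ) : Prop :=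
  ∀ y : Fin r → ℂ, (∀ k : ℕ, y ᵥ* ((L ^ k) * G) = 0) → y = 0

/-- The range (column space) of a matrix, as a submodule of `ℂⁿ`. -/
def mrange {a b : ℕ} (M : Matrix (Fin a) (Fin b) ℂ) : Submodule ℂ (Fin a → ℂ) :=
  LinearMap.range M.mulVecLin

/-- The set of states reachable from the origin by a finite input sequence
producing identically zero output along the way (the minimal input-containing
subspace `C*(Σ)`). -/
def OutNullReach {n p q : ℕ} (A : Matrix (Fin n) (Fin n) ℂ) (B : Matrix (Fin n) (Fin q) ℂ)
    (C : Matrix (Fin p) (Fin n) ℂ) (D : Matrix (Fin p) (Fin q) ℂ) (x : Fin n → ℂ) : Prop :=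
  ∃ (j : ℕ) (ξ : ℕ → (Fin n → ℂ)) (u : ℕ → (Fin q → ℂ)),
    ξ 0 = 0 ∧ (∀ i < j, ξ (i + 1) = A *ᵥ ξ i + B *ᵥ u i ∧ C *ᵥ ξ i + D *ᵥ u i = 0) ∧ ξ j = x

/-- Positive definiteness for Hermitian complex matrices. -/
def PosDefC {r : ℕ} (σ : Matrix (Fin r) (Fin r) ℂ) : Prop :=
  σ.IsHermitian ∧ ∀ v : Fin r → ℂ, v ≠ 0 → 0 < (star v ⬝ᵥ (σ *ᵥ v)).re

lemma mc_mul {a b c : ℕ} (M : Matrix (Fin a) (Fin b) ℂ) (N : Matrix (Fin b) (Fin c) ℂ) :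
    mc (M * N) = mc M * mc N := Matrix.map_mul

lemma mc_one {a : ℕ} : mc (1 : Matrix (Fin a) (Fin a) ℂ) = 1 := Matrix.map_one _ (map_zero _) (map_one _)

lemma mc_add {a b : ℕ} (M N : Matrix (Fin a) (Fin b) ℂ) : mc (M + N) = mc M + mc N :=
  Matrix.map_add _ (map_add _) _ _

lemma mc_neg {a b : ℕ} (M : Matrix (Fin a) (Fin b) ℂ) : mc (-M) = -(mc M) := by
  ext i j; simp [mc]

lemma mc_sub {a b : ℕ} (M N : Matrix (Fin a) (Fin b) ℂ) : mc (M - N) = mc M - mc N := by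
  ext i j; simp [mc]

lemma det_zsub {a : ℕ} (M : Matrix (Fin a) (Fin a) ℂ) :
    IsUnit ((Matrix.scalar (Fin a) (RatFunc.X : RatFunc ℂ)) - mc M).det := by
  have h : (Matrix.scalar (Fin a) (RatFunc.X : RatFunc ℂ)) - mc M
      = (Matrix.charmatrix M).map (algebraMap (Polynomial ℂ) (RatFunc ℂ)) := by
    ext i j
    by_cases h : i = j
    · subst h; simp [mc, Matrix.charmatrix_apply_eq, RatFunc.algebraMap_X, RatFunc.algebraMap_C,
        Matrix.scalar_apply]
    · simp [mc, Matrix.charmatrix_apply_ne _ _ _ h, RatFunc.algebraMap_C, Matrix.scalar_apply, h]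
  have hd := (algebraMap (Polynomial ℂ) (RatFunc ℂ)).map_det (Matrix.charmatrix M)
  rw [RingHom.mapMatrix_apply] at hd
  rw [h, ← hd]
  rw [isUnit_iff_ne_zero]
  intro h0
  have := (IsFractionRing.injective (Polynomial ℂ) (RatFunc ℂ))
  have h1 : (Matrix.charmatrix M).det = 0 := by
    apply this; simpa using h0
  exact (Matrix.charpoly_monic M).ne_zero h1

abbrev Z (a : ℕ) : Matrix (Fin a) (Fin a) (RatFunc ℂ) := Matrix.scalar (Fin a) (RatFunc.X : RatFunc ℂ)

lemma resneg_eq {a : ℕ} (M : Matrix (Fin a) (Fin a) ℂ) : resneg M = res (-M) := by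
  simp [resneg, res, mc_neg, sub_neg_eq_add]

lemma res_mul {a : ℕ} (M : Matrix (Fin a) (Fin a) ℂ) : res M * (Z a - mc M) = 1 :=
  Matrix.nonsing_inv_mul _ (det_zsub M)

lemma mul_res {a : ℕ} (M : Matrix (Fin a) (Fin a) ℂ) : (Z a - mc M) * res M = 1 :=
  Matrix.mul_nonsing_inv _ (det_zsub M)

lemma resneg_mul {a : ℕ} (M : Matrix (Fin a) (Fin a) ℂ) : resneg M * (Z a + mc M) = 1 := by
  rw [resneg_eq]; have := res_mul (-M); rwa [mc_neg, sub_neg_eq_add] at this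

lemma mul_resneg {a : ℕ} (M : Matrix (Fin a) (Fin a) ℂ) : (Z a + mc M) * resneg M = 1 := by
  rw [resneg_eq]; have := mul_res (-M); rwa [mc_neg, sub_neg_eq_add] at this

lemma Z_comm {a : ℕ} (M : Matrix (Fin a) (Fin a) (RatFunc ℂ)) : Z a * M = M * Z a :=
  (Matrix.scalar_commute _ (fun _ => Commute.all _ _) M).eq

lemma inner_calc {rk m q : ℕ} (F σ : Matrix (Fin rk) (Fin rk) ℂ) (G : Matrix (Fin q) (Fin rk) ℂ)
    (αk : Matrix (Fin rk) (Fin m) ℂ) (R₀ : Matrix (Fin q) (Fin m) ℂ)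
    (hs : σᴴ = σ)
    (k1 : σ * F + Fᴴ * σ + Gᴴ * G = 0)
    (k2 : αkᴴ * σ + R₀ᴴ * G = 0)
    (k3 : R₀ᴴ * R₀ = 1) :
    (mc R₀ᴴ - mc αkᴴ * resneg Fᴴ * mc Gᴴ) * (mc R₀ + mc G * res F * mc αk) = 1 := by
  set r1 := res F with hr1
  set r2 := resneg Fᴴ with hr2
  set a : Matrix (Fin rk) (Fin m) (RatFunc ℂ) := mc αk
  set a' := mc αkᴴ
  set g := mc G
  set g' := mc Gᴴ
  set ρ := mc R₀
  set ρ' := mc R₀ᴴ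
  set s := mc σ
  have t1 : ρ' * ρ = 1 := by rw [← mc_mul, k3, mc_one]
  have e1 : ρ' * g = -(a' * s) := by
    rw [← mc_mul, ← mc_mul, ← mc_neg]
    exact congrArg mc (neg_eq_of_add_eq_zero_right k2).symm
  have e2 : g' * ρ = -(s * a) := by
    rw [← mc_mul, ← mc_mul, ← mc_neg]
    apply congrArg mc
    have hk2 := congrArg Matrix.conjTranspose k2
    simp only [Matrix.conjTranspose_add, Matrix.conjTranspose_mul, Matrix.conjTranspose_conjTranspose,
      Matrix.conjTranspose_zero, hs] at hk2
    exact (neg_eq_of_add_eq_zero_right hk2).symm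
  have e3 : g' * g = s * (Z rk - mc F) - (Z rk + mc Fᴴ) * s := by
    have hk1 : Gᴴ * G = -(σ * F) - Fᴴ * σ := by
      have h0 := neg_eq_of_add_eq_zero_left k1
      rw [neg_eq_iff_eq_neg] at h0
      rw [h0]; abel
    rw [← mc_mul, hk1, Matrix.mul_sub, Matrix.add_mul, mc_sub, mc_neg, mc_mul, mc_mul]
    have := Z_comm (M := s)
    rw [this]
    abel
  have e4 : r2 * ((g' * g) * r1) = r2 * s - s * r1 := by
    rw [e3, Matrix.sub_mul, Matrix.mul_assoc, Matrix.mul_assoc]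
    rw [hr1, mul_res, Matrix.mul_one, Matrix.mul_sub]
    rw [← Matrix.mul_assoc r2, hr2, resneg_mul, Matrix.one_mul]
  have e5 : r2 * (g' * (g * (r1 * a))) = r2 * (s * a) - s * (r1 * a) := by
    calc r2 * (g' * (g * (r1 * a))) = (r2 * ((g' * g) * r1)) * a := by
          simp only [Matrix.mul_assoc]
      _ = (r2 * s - s * r1) * a := by rw [e4]
      _ = r2 * (s * a) - s * (r1 * a) := by simp only [Matrix.sub_mul, Matrix.mul_assoc]
  calc (ρ' - a' * r2 * g') * (ρ + g * r1 * a)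
      = ρ' * ρ + ρ' * (g * (r1 * a)) -
        (a' * (r2 * (g' * ρ)) + a' * (r2 * (g' * (g * (r1 * a))))) := by
        simp only [Matrix.sub_mul, Matrix.mul_add, Matrix.mul_assoc]
        abel
    _ = 1 := by
        rw [t1, ← Matrix.mul_assoc ρ' g, e1, e5, e2]
        simp only [Matrix.mul_neg, Matrix.neg_mul, Matrix.mul_sub, Matrix.mul_add, Matrix.mul_assoc]
        abel

private lemma aux_alg {rk m q : ℕ} (Λk : Matrix (Fin rk) (Fin rk) ℂ) (αk : Matrix (Fin rk) (Fin m) ℂ)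
    (R₀ : Matrix (Fin q) (Fin m) ℂ) (Hk : Matrix (Fin q) (Fin rk) ℂ)
    (σ : Matrix (Fin rk) (Fin rk) ℂ) (βk : Matrix (Fin m) (Fin rk) ℂ)
    (hs : σᴴ = σ)
    (hR : R₀ᴴ * R₀ = 1)
    (hric : σ * (Λk - αk * R₀ᴴ * Hk) + (Λk - αk * R₀ᴴ * Hk)ᴴ * σ
        - σ * αk * αkᴴ * σ + Hkᴴ * (1 - R₀ * R₀ᴴ) * Hk = 0)
    (hβ : βk = -(αkᴴ * σ) - R₀ᴴ * Hk) :
    (αkᴴ * σ + R₀ᴴ * (Hk + R₀ * βk) = 0) ∧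
    (σ * (Λk + αk * βk) + (Λk + αk * βk)ᴴ * σ + (Hk + R₀ * βk)ᴴ * (Hk + R₀ * βk) = 0) := by
  have hR2 : ∀ {k : ℕ} (X : Matrix (Fin m) (Fin k) ℂ), R₀ᴴ * (R₀ * X) = X := fun X => by
    rw [← Matrix.mul_assoc, hR, Matrix.one_mul]
  constructor
  · subst hβ
    rw [Matrix.mul_add, hR2]
    abel
  · subst hβ
    rw [← hric]
    simp only [Matrix.mul_add, Matrix.add_mul, Matrix.mul_sub, Matrix.sub_mul,
      Matrix.conjTranspose_add, Matrix.conjTranspose_mul, Matrix.conjTranspose_neg,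
      Matrix.conjTranspose_sub, Matrix.conjTranspose_conjTranspose, hs,
      Matrix.mul_neg, Matrix.neg_mul, Matrix.mul_one, Matrix.one_mul,
      Matrix.mul_assoc, hR2]
    abel

private lemma aux_stab {n p q rk m : ℕ}
    (A : Matrix (Fin n) (Fin n) ℂ) (B : Matrix (Fin n) (Fin q) ℂ)
    (C : Matrix (Fin p) (Fin n) ℂ) (D : Matrix (Fin p) (Fin q) ℂ)
    (Λk : Matrix (Fin rk) (Fin rk) ℂ) (αk : Matrix (Fin rk) (Fin m) ℂ)
    (R₀ : Matrix (Fin q) (Fin m) ℂ) (Hk : Matrix (Fin q) (Fin rk) ℂ)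
    (Pk : Matrix (Fin n) (Fin rk) ℂ) (σ : Matrix (Fin rk) (Fin rk) ℂ)
    (βk : Matrix (Fin m) (Fin rk) ℂ)
    (hσpos : ∀ v : Fin rk → ℂ, v ≠ 0 → 0 < (star v ⬝ᵥ (σ *ᵥ v)).re)
    (key1 : σ * (Λk + αk * βk) + (Λk + αk * βk)ᴴ * σ
        + (Hk + R₀ * βk)ᴴ * (Hk + R₀ * βk) = 0)
    (hobs : ∀ v : Fin n → ℂ, (∀ k : ℕ, C *ᵥ ((A ^ k) *ᵥ v) = 0) → v = 0)
    (hker : ∀ v : Fin rk → ℂ, Pk *ᵥ v = 0 → v = 0)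
    (h1 : A * Pk + B * Hk = Pk * Λk) (h2 : C * Pk + D * Hk = 0)
    (hBR : B * R₀ = Pk * αk) (hDR : D * R₀ = 0)
    (μ : ℂ) (v : Fin rk → ℂ) (hev : (Λk + αk * βk) *ᵥ v = μ • v) (hv : v ≠ 0) :
    μ.re < 0 := by
  set F := Λk + αk * βk with hF
  set G := Hk + R₀ * βk with hG
  set w := G *ᵥ v with hwdef
  set t := star v ⬝ᵥ (σ *ᵥ v) with htdef
  -- main energy identity
  have hkv : (σ * F) *ᵥ v + (Fᴴ * σ) *ᵥ v + (Gᴴ * G) *ᵥ v = 0 := by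
    have := congrArg (fun M => M *ᵥ v) key1
    simpa [Matrix.add_mulVec] using this
  have hdot := congrArg (fun z => star v ⬝ᵥ z) hkv
  simp only [dotProduct_add, dotProduct_zero] at hdot
  have hterm1 : star v ⬝ᵥ ((σ * F) *ᵥ v) = μ * t := by
    rw [← Matrix.mulVec_mulVec, hev, Matrix.mulVec_smul, dotProduct_smul, smul_eq_mul]
  have hterm2 : star v ⬝ᵥ ((Fᴴ * σ) *ᵥ v) = (starRingEnd ℂ) μ * t := by
    rw [← Matrix.mulVec_mulVec, Matrix.dotProduct_mulVec, ← Matrix.star_mulVec, hev]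
    rw [star_smul, smul_dotProduct]
    simp [htdef, Matrix.dotProduct_mulVec, Matrix.star_mulVec]
  have hterm3 : star v ⬝ᵥ ((Gᴴ * G) *ᵥ v) = star w ⬝ᵥ w := by
    rw [← Matrix.mulVec_mulVec, Matrix.dotProduct_mulVec, ← Matrix.star_mulVec]
  rw [hterm1, hterm2, hterm3] at hdot
  -- s is a sum of norms
  have hs : star w ⬝ᵥ w = ((∑ i, Complex.normSq (w i) : ℝ) : ℂ) := by
    push_cast
    simp [dotProduct, Complex.normSq_eq_conj_mul_self]
  have ht : 0 < t.re := hσpos v hv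
  have hsum_nonneg : 0 ≤ ∑ i, Complex.normSq (w i) :=
    Finset.sum_nonneg fun i _ => Complex.normSq_nonneg _
  -- real part of the identity
  have hre : 2 * μ.re * t.re + (∑ i, Complex.normSq (w i)) = 0 := by
    have h2' : ((2 * μ.re : ℝ) : ℂ) * t + ((∑ i, Complex.normSq (w i) : ℝ) : ℂ) = 0 := by
      rw [← hs]
      have : μ * t + (starRingEnd ℂ) μ * t = ((2 * μ.re : ℝ) : ℂ) * t := by
        rw [← add_mul]
        congr 1
        simpa using Complex.add_conj μ
      rw [← this]
      exact hdot
    have := congrArg Complex.re h2'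
    simpa [Complex.ofReal_mul, Complex.add_re, Complex.mul_re] using this
  rcases lt_or_ge μ.re 0 with h | h
  · exact h
  -- μ.re = 0 forces w = 0
  exfalso
  have hμ0 : μ.re = 0 := by nlinarith
  have hw0 : w = 0 := by
    have : (∑ i, Complex.normSq (w i)) = 0 := by rw [hμ0] at hre; linarith
    funext i
    have := (Finset.sum_eq_zero_iff_of_nonneg (fun i _ => Complex.normSq_nonneg (w i))).mp this i (Finset.mem_univ i)
    simpa using Complex.normSq_eq_zero.mp this
  -- observability argument
  set u := βk *ᵥ v with hu
  set x := Pk *ᵥ v with hx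
  have hHkv : Hk *ᵥ v = -(R₀ *ᵥ u) := by
    have : Hk *ᵥ v + R₀ *ᵥ u = 0 := by
      have := hw0
      rw [hwdef, hG, Matrix.add_mulVec, ← Matrix.mulVec_mulVec] at this
      exact this
    exact eq_neg_of_add_eq_zero_left this
  have hx1 : A *ᵥ x = μ • x := by
    have hh := congrArg (fun M => M *ᵥ v) h1
    simp only [Matrix.add_mulVec] at hh
    -- hh : (A * Pk) *ᵥ v + (B * Hk) *ᵥ v = (Pk * Λk) *ᵥ v
    have hh' : A *ᵥ x + B *ᵥ (Hk *ᵥ v) = Pk *ᵥ (Λk *ᵥ v) := by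
      simpa [hx, Matrix.mulVec_mulVec] using hh
    rw [hHkv] at hh'
    have hBRu : B *ᵥ (R₀ *ᵥ u) = Pk *ᵥ (αk *ᵥ u) := by
      calc B *ᵥ (R₀ *ᵥ u) = (B * R₀) *ᵥ u := Matrix.mulVec_mulVec u B R₀
        _ = (Pk * αk) *ᵥ u := by rw [hBR]
        _ = Pk *ᵥ (αk *ᵥ u) := (Matrix.mulVec_mulVec u Pk αk).symm
    have : A *ᵥ x = Pk *ᵥ (Λk *ᵥ v) + Pk *ᵥ (αk *ᵥ u) := by
      rw [← hBRu]
      have := hh'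
      rw [Matrix.mulVec_neg] at this
      linear_combination (norm := module) this
    rw [this]
    have h9 : Pk *ᵥ (Λk *ᵥ v) + Pk *ᵥ (αk *ᵥ u) = Pk *ᵥ (F *ᵥ v) := by
      rw [hF, Matrix.add_mulVec, Matrix.mulVec_add]
      congr 1
      rw [hu]
      exact congrArg _ (Matrix.mulVec_mulVec v αk βk)
    rw [h9, hev, Matrix.mulVec_smul]
  have hx2 : C *ᵥ x = 0 := by
    have hh := congrArg (fun M => M *ᵥ v) h2
    simp only [Matrix.add_mulVec, Matrix.zero_mulVec] at hh
    have hh' : C *ᵥ x + D *ᵥ (Hk *ᵥ v) = 0 := by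
      simpa [hx, Matrix.mulVec_mulVec] using hh
    have hDRu : D *ᵥ (R₀ *ᵥ u) = 0 := by
      calc D *ᵥ (R₀ *ᵥ u) = (D * R₀) *ᵥ u := Matrix.mulVec_mulVec u D R₀
        _ = 0 := by rw [hDR, Matrix.zero_mulVec]
    rw [hHkv, Matrix.mulVec_neg, hDRu] at hh'
    simpa using hh'
  have hxk : ∀ k : ℕ, (A ^ k) *ᵥ x = (μ ^ k) • x := by
    intro k
    induction k with
    | zero => simp
    | succ k ih =>
      rw [pow_succ, pow_succ, ← Matrix.mulVec_mulVec, hx1, Matrix.mulVec_smul, ih,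
        smul_smul, mul_comm]
  have hx0 : x = 0 := by
    apply hobs
    intro k
    rw [hxk k, Matrix.mulVec_smul, hx2, smul_zero]
  exact hv (hker v hx0)

/-- with `σ > 0` solving the Riccati equation and `β_k = −α_k*σ − R₀*H_k`,
the matrix `Λ_k + α_kβ_k` is stable and `K_β` is a tall inner function. -/
theorem stmt12 {n p q rk m : ℕ}
    (A : Matrix (Fin n) (Fin n) ℂ) (B : Matrix (Fin n) (Fin q) ℂ)
    (C : Matrix (Fin p) (Fin n) ℂ) (D : Matrix (Fin p) (Fin q) ℂ)
    (Λk : Matrix (Fin rk) (Fin rk) ℂ) (αk : Matrix (Fin rk) (Fin m) ℂ)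
    (R₀ : Matrix (Fin q) (Fin m) ℂ) (Hk : Matrix (Fin q) (Fin rk) ℂ)
    (Pk : Matrix (Fin n) (Fin rk) ℂ) (σ : Matrix (Fin rk) (Fin rk) ℂ)
    (βk : Matrix (Fin m) (Fin rk) ℂ)
    (hσ : PosDefC σ)
    (hR : R₀ᴴ * R₀ = 1)
    (hric : σ * (Λk - αk * R₀ᴴ * Hk) + (Λk - αk * R₀ᴴ * Hk)ᴴ * σ
        - σ * αk * αkᴴ * σ + Hkᴴ * (1 - R₀ * R₀ᴴ) * Hk = 0)
    (hβ : βk = -(αkᴴ * σ) - R₀ᴴ * Hk)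
    (hobs : Observable C A)
    (hker : ∀ v : Fin rk → ℂ, Pk *ᵥ v = 0 → v = 0)
    (h1 : A * Pk + B * Hk = Pk * Λk) (h2 : C * Pk + D * Hk = 0)
    (hBR : B * R₀ = Pk * αk) (hDR : D * R₀ = 0) :
    (∀ (μ : ℂ) (v : Fin rk → ℂ), (Λk + αk * βk) *ᵥ v = μ • v → v ≠ 0 → μ.re < 0) ∧
    (mc R₀ᴴ - mc αkᴴ * resneg (Λk + αk * βk)ᴴ * mc (Hk + R₀ * βk)ᴴ) *
        (mc R₀ + mc (Hk + R₀ * βk) * res (Λk + αk * βk) * mc αk) = 1 := by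
  have hs : σᴴ = σ := hσ.1
  obtain ⟨k2, key1⟩ := aux_alg Λk αk R₀ Hk σ βk hs hR hric hβ
  constructor
  · intro μ v hev hv
    exact aux_stab A B C D Λk αk R₀ Hk Pk σ βk hσ.2 key1 hobs hker h1 h2 hBR hDR μ v hev hv
  · exact inner_calc (Λk + αk * βk) σ (Hk + R₀ * βk) αk R₀ hs key1 k2 hR
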